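/- arXiv:1906.11732 — 4 statements merged into one kernel-verified Lean document; each statement's English description precedes it below -/
import Mathlib

section
/- Let Z = (Z_1, ..., Z_d) be a continuous random vector on ℝ^d whose law has a density with respect to Lebesgue measure of the form h(z) = c · K((z − μ)ᵀ Ω (z − μ)) for some measurable function K: ℝ → [0,∞), normalizing constant c > 0, mean vector μ with E Z_k = μ_k, and positive definite matrix Ω, and suppose each coordinate has finite variance Var(Z_k) = σ_k² < ∞. Let f*: ℝ^d → ℝ^p be a function whose partial derivatives ∂f*_q/∂z_l exist and are continuous almost everywhere, with E|Z_k f*_q(Z^{∖k})| < ∞. If Cov(Z_k, Z_{k'}) = 0 for all k ≠ k', then Cov(Z_k, f*_q(Z^{∖k})) = 0 for all k = 1,...,d and q = 1,...,p, where Z^{∖k} is Z with its k-th coordinate replaced by a fixed constant c_k. -/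
/-!
The law of `Z` is invariant under every affine map `z ↦ μ + A (z - μ)` with `|det A| = 1` and
`Aᵀ Ω A = Ω`. With `R = Ω^{1/2}` and `F_i` the reflection of the `i`-th coordinate, the choice
`A = R⁻¹ F_i R` shows that `R (Z - μ)` has uncorrelated coordinates, i.e. `R Σ R` is diagonal,
where `Σ = diag(Var Z_k)` is the covariance matrix of `Z`. As `Z` has a density, `Σ` is positive
definite, and `Σ^{1/2} R Σ^{1/2}`, being the positive semidefinite square root of a diagonal
matrix, is diagonal; hence so are `R` and `Ω = R²`. Then `A = F_k` is admissible: reflecting the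
`k`-th coordinate about `μ_k` preserves the law of `Z` and negates
`(Z_k - μ_k) (f(Z^{∖k}) - E f(Z^{∖k}))`, whose mean, the covariance, therefore vanishes.
-/

open MeasureTheory ProbabilityTheory Matrix

noncomputable def covar {Ω : Type*} [MeasurableSpace Ω] (P : Measure Ω) (A B : Ω → ℝ) : ℝ :=
  ∫ ω, (A ω - ∫ ω', A ω' ∂P) * (B ω - ∫ ω', B ω' ∂P) ∂P

open scoped ENNReal

namespace MeasureTheory.MeasurePreserving

variable {α : Type*} [MeasurableSpace α] {μ : Measure α} {T : α → α}

theorem withDensity_of_comp_eq (hT : MeasurePreserving T μ μ) {ρ : α → ℝ≥0∞}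
    (hρ : Measurable ρ) (hρT : ∀ x, ρ (T x) = ρ x) :
    MeasurePreserving T (μ.withDensity ρ) (μ.withDensity ρ) := by
  refine ⟨hT.measurable, Measure.ext fun s hs => ?_⟩
  rw [Measure.map_apply hT.measurable hs, withDensity_apply _ (hT.measurable hs),
    withDensity_apply _ hs]
  conv_rhs => rw [← hT.map_eq, setLIntegral_map hs hρ hT.measurable]
  simp_rw [hρT]

theorem integral_eq_zero_of_comp_eq_neg (hT : MeasurePreserving T μ μ) {φ : α → ℝ}
    (hφ : AEStronglyMeasurable φ μ) (hφT : ∀ x, φ (T x) = -φ x) : ∫ x, φ x ∂μ = 0 := by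
  have h : ∫ x, φ x ∂μ = -∫ x, φ x ∂μ := by
    conv_lhs => rw [← hT.map_eq]
    rw [integral_map hT.aemeasurable (by rwa [hT.map_eq])]
    simp_rw [hφT, integral_neg]
  linarith

end MeasureTheory.MeasurePreserving

namespace Matrix

variable {n : Type*}

theorem dotProduct_mulVec_mulVec [Fintype n] (A Q : Matrix n n ℝ) (x : n → ℝ) :
    (A *ᵥ x) ⬝ᵥ Q *ᵥ (A *ᵥ x) = x ⬝ᵥ (Aᵀ * Q * A) *ᵥ x := by
  rw [← mulVec_mulVec, ← mulVec_mulVec, dotProduct_mulVec x Aᵀ, vecMul_transpose]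

variable [DecidableEq n]

def signFlip (i : n) : Matrix n n ℝ := diagonal (Pi.mulSingle i (-1))

theorem transpose_signFlip (i : n) : (signFlip i)ᵀ = signFlip i :=
  diagonal_transpose _

variable [Fintype n]

theorem signFlip_mul_self (i : n) : signFlip i * signFlip i = 1 := by
  rw [signFlip, diagonal_mul_diagonal, ← diagonal_one]
  congr 1
  ext a
  by_cases h : a = i
  · subst h; simp
  · simp [h]

theorem IsDiag.transpose_signFlip_mul_mul_signFlip {Q : Matrix n n ℝ} (hQ : Q.IsDiag) (i : n) :
    (signFlip i)ᵀ * Q * signFlip i = Q := by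
  rw [← hQ.diagonal_diag, transpose_signFlip, signFlip, diagonal_mul_diagonal,
    diagonal_mul_diagonal]
  congr 1
  ext a
  by_cases h : a = i
  · subst h; simp
  · simp [h]

theorem signFlip_mulVec (i : n) (x : n → ℝ) : signFlip i *ᵥ x = Function.update x i (-x i) := by
  ext a
  by_cases h : a = i
  · subst h; simp [signFlip, mulVec_diagonal]
  · simp [signFlip, mulVec_diagonal, h]

theorem det_signFlip (i : n) : (signFlip i).det = -1 := by
  simp [signFlip, det_diagonal]

theorem measurePreserving_mulVec {A : Matrix n n ℝ} (hA : |A.det| = 1) :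
    MeasurePreserving (A *ᵥ ·) volume volume := by
  have hA' : A.det ≠ 0 := by rintro h; simp [h] at hA
  refine ⟨(toLin' A).continuous_of_finiteDimensional.measurable, ?_⟩
  have h := Real.map_matrix_volume_pi_eq_smul_volume_pi hA'
  rw [abs_inv, hA, inv_one, ENNReal.ofReal_one, one_smul] at h
  exact h

theorem measurePreserving_add_mulVec_sub (m : n → ℝ) {A : Matrix n n ℝ} (hA : |A.det| = 1) :
    MeasurePreserving (fun z => m + A *ᵥ (z - m)) volume volume :=
  (measurePreserving_add_left volume m).comp <|
    (measurePreserving_mulVec hA).comp (measurePreserving_sub_right volume m)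

open scoped MatrixOrder in
theorem PosSemidef.isDiag_of_isDiag_sq {S : Matrix n n ℝ} (hS : S.PosSemidef)
    (h : (S ^ 2).IsDiag) : S.IsDiag := by
  set t := fun i => √((S ^ 2) i i)
  have hsq : S ^ 2 = diagonal t ^ 2 := by
    rw [← h.diagonal_diag, sq (diagonal t), diagonal_mul_diagonal]
    congr 1
    ext i
    exact (Real.mul_self_sqrt (hS.pow 2).diag_nonneg).symm
  have ht : (diagonal t).PosSemidef := posSemidef_diagonal_iff.mpr fun i => Real.sqrt_nonneg _
  rw [← CFC.sqrt_sq S hS.nonneg, hsq, CFC.sqrt_sq _ ht.nonneg]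
  exact isDiag_diagonal t

theorem PosSemidef.isDiag_of_isDiag_mul_diagonal_mul {R : Matrix n n ℝ} (hR : R.PosSemidef)
    {s : n → ℝ} (hs : ∀ i, 0 < s i) (h : (R * diagonal s * R).IsDiag) : R.IsDiag := by
  set t := fun i => √(s i)
  have ht : diagonal t * diagonal t = diagonal s := by
    rw [diagonal_mul_diagonal]
    exact congrArg diagonal (funext fun i => Real.mul_self_sqrt (hs i).le)
  have hS : (diagonal t * R * diagonal t).PosSemidef := by
    simpa using hR.mul_mul_conjTranspose_same (diagonal t)
  have hS2 : (diagonal t * R * diagonal t) ^ 2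
      = diagonal t * (R * diagonal s * R) * diagonal t := by
    rw [sq, ← ht]; simp only [Matrix.mul_assoc]
  have hSdiag := hS.isDiag_of_isDiag_sq <| by
    rw [hS2, ← h.diagonal_diag, diagonal_mul_diagonal, diagonal_mul_diagonal]
    exact isDiag_diagonal _
  intro i j hij
  have hSij : (diagonal t * R * diagonal t) i j = 0 := hSdiag hij
  rw [mul_diagonal, diagonal_mul] at hSij
  have hti : t i ≠ 0 := (Real.sqrt_pos.mpr (hs i)).ne'
  have htj : t j ≠ 0 := (Real.sqrt_pos.mpr (hs j)).ne'
  simpa [hti, htj] using hSij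

end Matrix

section Moments

variable {Ω ι : Type*} [MeasurableSpace Ω] {P : Measure Ω}

theorem integral_mulVec_mul_mulVec [Fintype ι] {X : Ω → ι → ℝ}
    (hX : ∀ a, MemLp (fun ω => X ω a) 2 P)
    {m n : Type*} (M : Matrix m ι ℝ) (N : Matrix n ι ℝ) (i : m) (j : n) :
    ∫ ω, (M *ᵥ X ω) i * (N *ᵥ X ω) j ∂P
      = (M * of (fun a b => ∫ ω, X ω a * X ω b ∂P) * Nᵀ) i j := by
  have hint : ∀ a b, Integrable (fun ω => M i a * N j b * (X ω a * X ω b)) P :=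
    fun a b => ((hX a).integrable_mul (hX b)).const_mul _
  have hexp : ∀ ω, (M *ᵥ X ω) i * (N *ᵥ X ω) j
      = ∑ a, ∑ b, M i a * N j b * (X ω a * X ω b) := by
    intro ω
    simp only [mulVec, dotProduct, Finset.sum_mul_sum]
    exact Finset.sum_congr rfl fun a _ => Finset.sum_congr rfl fun b _ => by ring
  simp_rw [hexp]
  rw [integral_finsetSum _ fun a _ => integrable_finsetSum _ fun b _ => hint a b]
  simp_rw [integral_finsetSum _ fun b _ => hint _ b, integral_const_mul, mul_apply,
    transpose_apply, of_apply, Finset.sum_mul]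
  rw [Finset.sum_comm]
  exact Finset.sum_congr rfl fun a _ => Finset.sum_congr rfl fun b _ => by ring

theorem secondMoments_eq_diagonal_variance [DecidableEq ι] {Z : Ω → ι → ℝ} {m : ι → ℝ}
    (hL2 : ∀ a, MemLp (fun ω => Z ω a) 2 P) (hmean : ∀ a, ∫ ω, Z ω a ∂P = m a)
    (huncorr : ∀ a b, a ≠ b → covar P (fun ω => Z ω a) (fun ω => Z ω b) = 0) :
    of (fun a b => ∫ ω, (Z ω - m) a * (Z ω - m) b ∂P)
      = diagonal fun a => variance (fun ω => Z ω a) P := by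
  ext a b
  rw [of_apply]
  by_cases hab : a = b
  · subst hab
    rw [diagonal_apply_eq, variance_eq_integral (hL2 a).aemeasurable, hmean a]
    simp only [Pi.sub_apply, sq]
  · rw [diagonal_apply_ne _ hab, ← huncorr a b hab]
    simp only [covar, hmean, Pi.sub_apply]

theorem variance_ne_zero_of_map_absolutelyContinuous [Fintype ι] [IsProbabilityMeasure P]
    {Z : Ω → ι → ℝ} (hZ : Measurable Z) (hac : P.map Z ≪ volume) {a : ι}
    (hZa : MemLp (fun ω => Z ω a) 2 P) :
    variance (fun ω => Z ω a) P ≠ 0 := by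
  intro h
  have hconst : ∀ᵐ z ∂(P.map Z), z a = P[fun ω => Z ω a] :=
    (ae_map_iff hZ.aemeasurable (measurableSet_eq_fun (by fun_prop) measurable_const)).mpr
      (ae_eq_integral_of_variance_eq_zero hZa h)
  have hnot : ∀ᵐ z ∂(P.map Z), z a ≠ P[fun ω => Z ω a] :=
    hac.ae_le (volume_pi (α := fun _ : ι => ℝ) ▸ Measure.ae_eval_ne _ a _)
  have := Measure.isProbabilityMeasure_map (μ := P) hZ.aemeasurable
  obtain ⟨z, hz, hz'⟩ := (hconst.and hnot).exists
  exact hz' hz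

end Moments

section Elliptical

variable {ι : Type*} [Fintype ι]

noncomputable def ellipticalMeasure (g : ℝ → ℝ≥0∞) (m : ι → ℝ) (Q : Matrix ι ι ℝ) :
    Measure (ι → ℝ) :=
  volume.withDensity fun z => g ((z - m) ⬝ᵥ Q *ᵥ (z - m))

variable [DecidableEq ι] {g : ℝ → ℝ≥0∞}

theorem measurePreserving_ellipticalMeasure (hg : Measurable g) (m : ι → ℝ)
    {Q A : Matrix ι ι ℝ} (hA : |A.det| = 1) (hAQ : Aᵀ * Q * A = Q) :
    MeasurePreserving (fun z => m + A *ᵥ (z - m)) (ellipticalMeasure g m Q)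
      (ellipticalMeasure g m Q) := by
  refine (measurePreserving_add_mulVec_sub m hA).withDensity_of_comp_eq (by fun_prop)
    fun z => ?_
  rw [add_sub_cancel_left, dotProduct_mulVec_mulVec, hAQ]

theorem integral_ellipticalMeasure_mulVec_mul_mulVec_eq_zero (hg : Measurable g)
    (m : ι → ℝ) {Q R : Matrix ι ι ℝ} (hR : IsUnit R.det) (hRQ : Rᵀ * R = Q) {i j : ι}
    (hij : i ≠ j) :
    ∫ z, (R *ᵥ (z - m)) i * (R *ᵥ (z - m)) j ∂(ellipticalMeasure g m Q) = 0 := by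
  set A := R⁻¹ * signFlip i * R
  have hRA : R * A = signFlip i * R := by
    rw [← Matrix.mul_assoc, ← Matrix.mul_assoc, mul_nonsing_inv _ hR, Matrix.one_mul]
  have hA : |A.det| = 1 := by
    have h : R.det * A.det = R.det * (-1) := by
      rw [← det_mul, hRA, det_mul, det_signFlip, mul_comm]
    rw [mul_left_cancel₀ hR.ne_zero h, abs_neg, abs_one]
  have hAQ : Aᵀ * Q * A = Q := calc
    Aᵀ * Q * A = (R * A)ᵀ * (R * A) := by
      rw [← hRQ, transpose_mul R A]; simp only [Matrix.mul_assoc]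
    _ = Q := by
      rw [hRA, transpose_mul, transpose_signFlip, Matrix.mul_assoc,
        ← Matrix.mul_assoc (signFlip i), signFlip_mul_self, Matrix.one_mul, hRQ]
  refine (measurePreserving_ellipticalMeasure hg m hA hAQ).integral_eq_zero_of_comp_eq_neg
    (by fun_prop) fun z => ?_
  rw [add_sub_cancel_left, mulVec_mulVec, hRA, ← mulVec_mulVec, signFlip_mulVec,
    Function.update_self, Function.update_of_ne hij.symm]
  ring

theorem integral_ellipticalMeasure_sub_mul_update_eq_zero (hg : Measurable g)
    (m : ι → ℝ) {Q : Matrix ι ι ℝ} (hQ : Q.IsDiag) (k : ι) (c : ℝ) {ψ : (ι → ℝ) → ℝ}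
    (hψ : Measurable ψ) :
    ∫ z, (z k - m k) * ψ (Function.update z k c) ∂(ellipticalMeasure g m Q) = 0 := by
  have hA : |(signFlip k).det| = 1 := by rw [det_signFlip, abs_neg, abs_one]
  refine (measurePreserving_ellipticalMeasure hg m hA
    (hQ.transpose_signFlip_mul_mul_signFlip k)).integral_eq_zero_of_comp_eq_neg
    (by fun_prop) fun z => ?_
  have hupd : Function.update (m + signFlip k *ᵥ (z - m)) k c = Function.update z k c := by
    ext a
    by_cases h : a = k
    · subst h; simp
    · simp [signFlip_mulVec, h]
  rw [hupd, Pi.add_apply, add_sub_cancel_left, signFlip_mulVec, Function.update_self,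
    Pi.sub_apply]
  ring

open scoped MatrixOrder in
theorem isDiag_of_uncorrelated_of_map_eq_ellipticalMeasure {Ω : Type*} [MeasurableSpace Ω]
    {P : Measure Ω} [IsProbabilityMeasure P] {Z : Ω → ι → ℝ} (hZ : Measurable Z)
    (hg : Measurable g) {m : ι → ℝ} {Q : Matrix ι ι ℝ} (hQ : Q.PosDef)
    (hlaw : P.map Z = ellipticalMeasure g m Q) (hmean : ∀ a, ∫ ω, Z ω a ∂P = m a)
    (hL2 : ∀ a, MemLp (fun ω => Z ω a) 2 P)
    (huncorr : ∀ a b, a ≠ b → covar P (fun ω => Z ω a) (fun ω => Z ω b) = 0) :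
    Q.IsDiag := by
  set R := CFC.sqrt Q
  have hR : R.PosSemidef := (CFC.sqrt_nonneg Q).posSemidef
  have hRR : R * R = Q := CFC.sqrt_mul_sqrt_self Q hQ.posSemidef.nonneg
  have hRT : Rᵀ = R := hR.isHermitian
  have hRdet : IsUnit R.det :=
    isUnit_iff_ne_zero.mpr fun h => hQ.det_pos.ne' (by rw [← hRR, det_mul, h, zero_mul])
  have hcov := secondMoments_eq_diagonal_variance hL2 hmean huncorr
  have hvar : ∀ a, 0 < variance (fun ω => Z ω a) P := fun a =>
    (variance_nonneg _ _).lt_of_ne' <| variance_ne_zero_of_map_absolutelyContinuous hZ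
      (hlaw ▸ withDensity_absolutelyContinuous _ _) (hL2 a)
  have hRdiag : R.IsDiag := hR.isDiag_of_isDiag_mul_diagonal_mul hvar fun i j hij => calc
    (R * diagonal (fun a => variance (fun ω => Z ω a) P) * R) i j
        = (R * of (fun a b => ∫ ω, (Z ω - m) a * (Z ω - m) b ∂P) * Rᵀ) i j := by
      rw [hcov, hRT]
    _ = ∫ ω, (R *ᵥ (Z ω - m)) i * (R *ᵥ (Z ω - m)) j ∂P :=
      (integral_mulVec_mul_mulVec (fun a => (hL2 a).sub (memLp_const _)) R R i j).symm
    _ = ∫ z, (R *ᵥ (z - m)) i * (R *ᵥ (z - m)) j ∂(P.map Z) := by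
      rw [integral_map hZ.aemeasurable (by fun_prop)]
    _ = 0 := by
      rw [hlaw]
      exact integral_ellipticalMeasure_mulVec_mul_mulVec_eq_zero hg m hRdet (by rw [hRT, hRR]) hij
  rw [← hRR, ← hRdiag.diagonal_diag, diagonal_mul_diagonal]
  exact isDiag_diagonal _

end Elliptical

theorem disentanglement_uncorrelated_elliptical_general
    {Ω : Type*} [MeasurableSpace Ω] (P : Measure Ω) [IsProbabilityMeasure P]
    (d p : ℕ) (Z : Ω → Fin d → ℝ) (hZmeas : Measurable Z)
    (μv : Fin d → ℝ) (Ωm : Matrix (Fin d) (Fin d) ℝ) (hΩ : Ωm.PosDef)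
    (K : ℝ → ℝ) (hKmeas : Measurable K)
    (cst : ℝ)
    (hdens : Measure.map Z P
      = (volume : Measure (Fin d → ℝ)).withDensity
          fun z => ENNReal.ofReal (cst * K ((z - μv) ⬝ᵥ (Ωm *ᵥ (z - μv)))))
    (hmean : ∀ k, ∫ ω, Z ω k ∂P = μv k)
    (hL2 : ∀ k, MemLp (fun ω => Z ω k) 2 P)
    (huncorr : ∀ k k', k ≠ k' → covar P (fun ω => Z ω k) (fun ω => Z ω k') = 0)
    (c : Fin d → ℝ)
    (f : Fin p → (Fin d → ℝ) → ℝ) (hfmeas : ∀ q, Measurable (f q))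
    (k : Fin d) (q : Fin p) :
    covar P (fun ω => Z ω k) (fun ω => f q (Function.update (Z ω) k (c k))) = 0 := by
  have hg : Measurable fun t => ENNReal.ofReal (cst * K t) := by fun_prop
  have hΩdiag : Ωm.IsDiag :=
    isDiag_of_uncorrelated_of_map_eq_ellipticalMeasure hZmeas hg hΩ hdens hmean hL2 huncorr
  set e := ∫ ω, f q (Function.update (Z ω) k (c k)) ∂P
  calc covar P (fun ω => Z ω k) (fun ω => f q (Function.update (Z ω) k (c k)))
      = ∫ z, (z k - μv k) * (f q (Function.update z k (c k)) - e) ∂(P.map Z) := by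
        rw [covar, hmean k, integral_map hZmeas.aemeasurable (by fun_prop)]
    _ = 0 := by
      rw [hdens]
      exact integral_ellipticalMeasure_sub_mul_update_eq_zero hg μv hΩdiag k (c k)
        (ψ := fun z => f q z - e) (by fun_prop)

/-- **Maximal disentanglement under an uncorrelated elliptical encoder.**
If `Z` has an elliptical Lebesgue density `z ↦ cst · K((z−μ)ᵀ Ω (z−μ))` with `Ω` positive
definite, mean `μ`, finite coordinate variances, pairwise zero covariances, and `f` has
a.e. continuous partial derivatives with `E|Z_k f_q(Z^{∖k})| < ∞`, then
`Cov(Z_k, f_q(Z^{∖k})) = 0` for all `k` and `q`. -/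
theorem disentanglement_uncorrelated_elliptical
    {Ω : Type*} [MeasurableSpace Ω] (P : Measure Ω) [IsProbabilityMeasure P]
    (d p : ℕ) (Z : Ω → Fin d → ℝ) (hZmeas : Measurable Z)
    (μv : Fin d → ℝ) (Ωm : Matrix (Fin d) (Fin d) ℝ) (hΩ : Ωm.PosDef)
    (K : ℝ → ℝ) (hKmeas : Measurable K) (hKnonneg : ∀ t, 0 ≤ K t)
    (cst : ℝ) (hcst : 0 < cst)
    (hdens : Measure.map Z P
      = (volume : Measure (Fin d → ℝ)).withDensity
          fun z => ENNReal.ofReal (cst * K ((z - μv) ⬝ᵥ (Ωm *ᵥ (z - μv)))))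
    (hmean : ∀ k, ∫ ω, Z ω k ∂P = μv k)
    (σ : Fin d → ℝ)
    (hL2 : ∀ k, MemLp (fun ω => Z ω k) 2 P)
    (hvar : ∀ k, variance (fun ω => Z ω k) P = (σ k) ^ 2)
    (huncorr : ∀ k k', k ≠ k' → covar P (fun ω => Z ω k) (fun ω => Z ω k') = 0)
    (c : Fin d → ℝ)
    (f : Fin p → (Fin d → ℝ) → ℝ) (hfmeas : ∀ q, Measurable (f q))
    (pd : Fin p → Fin d → (Fin d → ℝ) → ℝ)
    (hderiv : ∀ q l, ∀ᵐ z ∂(volume : Measure (Fin d → ℝ)),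
      HasDerivAt (fun t => f q (Function.update z l t)) (pd q l z) (z l))
    (hcont : ∀ q l, ∀ᵐ z ∂(volume : Measure (Fin d → ℝ)), ContinuousAt (pd q l) z)
    (hint : ∀ k q, Integrable (fun ω => Z ω k * f q (Function.update (Z ω) k (c k))) P)
    (k : Fin d) (q : Fin p) :
    covar P (fun ω => Z ω k) (fun ω => f q (Function.update (Z ω) k (c k))) = 0 :=
  disentanglement_uncorrelated_elliptical_general P d p Z hZmeas μv Ωm hΩ K hKmeas cst hdens hmean
    hL2 huncorr c f hfmeas k q
end

section
/- Let Y be a real random variable with the standard normal distribution N(0,1), and let g: ℝ → ℝ be a differentiable function with E|g'(Y)| < ∞ and E|Y g(Y)| < ∞. Then Cov(Y, g(Y)) = E[Y g(Y)] = E[g'(Y)]. -/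
/-!
Stein's identity is integration by parts against the Gaussian density `φ`, which satisfies
`φ' x = -((x - μ) / v) * φ x`; hence `∫ g' φ = -∫ g φ' = v⁻¹ ∫ (x - μ) g φ`. The boundary terms
vanish because `g φ` is integrable: `g` is continuous near `μ`, and away from `μ` it is dominated by
`(x - μ) g φ`. Since `Y` is centred, its covariance with `g(Y)` is `E[Y g(Y)]`.
-/

open MeasureTheory ProbabilityTheory

open scoped NNReal

lemma covar_eq_integral_mul_of_integral_eq_zero {Ω : Type*} [MeasurableSpace Ω] {P : Measure Ω}
    {A B : Ω → ℝ} (hA : Integrable A P) (hAB : Integrable (fun ω => A ω * B ω) P)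
    (hA₀ : ∫ ω, A ω ∂P = 0) :
    covar P A B = ∫ ω, A ω * B ω ∂P := by
  simp only [covar, hA₀, sub_zero, mul_sub]
  rw [integral_sub hAB (hA.mul_const _), integral_mul_const, hA₀, zero_mul, sub_zero]

lemma Continuous.integrable_of_integrable_sub_smul {E : Type*} [NormedAddCommGroup E]
    [NormedSpace ℝ E] {μ : Measure ℝ} [IsFiniteMeasureOnCompacts μ] {f : ℝ → E}
    (hf : Continuous f) (c : ℝ) (h : Integrable (fun x => (x - c) • f x) μ) :
    Integrable f μ := by
  have hfar : IntegrableOn f (Metric.closedBall c 1)ᶜ μ := by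
    refine Integrable.mono h.integrableOn hf.aestronglyMeasurable.restrict ?_
    refine (ae_restrict_iff' Metric.isClosed_closedBall.measurableSet.compl).2
      (ae_of_all _ fun x hx => ?_)
    have hx : 1 < |x - c| := by simpa [Real.dist_eq] using hx
    rw [norm_smul, Real.norm_eq_abs]
    exact le_mul_of_one_le_left (norm_nonneg _) hx.le
  simpa using (hf.continuousOn.integrableOn_compact (isCompact_closedBall c 1)).union hfar

namespace ProbabilityTheory

lemma hasDerivAt_gaussianPDFReal (μ : ℝ) (v : ℝ≥0) (x : ℝ) :
    HasDerivAt (gaussianPDFReal μ v) (-((x - μ) / v) * gaussianPDFReal μ v x) x := by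
  have hexp : HasDerivAt (fun y => -(y - μ) ^ 2 / (2 * v)) (-((x - μ) / v)) x := by
    refine (((hasDerivAt_id x).sub_const μ).pow 2).neg.div_const (2 * (v : ℝ)) |>.congr_deriv ?_
    simp only [id, Nat.cast_ofNat, mul_one]
    ring
  rw [gaussianPDFReal_def]
  exact (hexp.exp.const_mul _).congr_deriv (by ring)

lemma integrable_gaussianReal_iff {μ : ℝ} {v : ℝ≥0} (hv : v ≠ 0) {f : ℝ → ℝ} :
    Integrable f (gaussianReal μ v) ↔ Integrable (fun x => gaussianPDFReal μ v x * f x) := by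
  rw [gaussianReal_of_var_ne_zero μ hv, gaussianPDF_def,
    integrable_withDensity_iff_integrable_smul' (measurable_gaussianPDFReal μ v).ennreal_ofReal
      (ae_of_all _ fun _ => ENNReal.ofReal_lt_top)]
  simp only [ENNReal.toReal_ofReal (gaussianPDFReal_nonneg μ v _), smul_eq_mul]

theorem integral_sub_mul_gaussianReal_eq_var_mul_integral_deriv {μ : ℝ} {v : ℝ≥0} {g : ℝ → ℝ}
    (hg : Differentiable ℝ g) (hg' : Integrable (deriv g) (gaussianReal μ v))
    (hxg : Integrable (fun x => (x - μ) * g x) (gaussianReal μ v)) :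
    ∫ x, (x - μ) * g x ∂gaussianReal μ v = v * ∫ x, deriv g x ∂gaussianReal μ v := by
  rcases eq_or_ne v 0 with rfl | hv
  · simp
  simp only [integral_gaussianReal_eq_integral_smul hv, smul_eq_mul]
  set φ := gaussianPDFReal μ v
  have hφg' : Integrable fun x => φ x * deriv g x := (integrable_gaussianReal_iff hv).1 hg'
  have hφxg : Integrable fun x => φ x * ((x - μ) * g x) := (integrable_gaussianReal_iff hv).1 hxg
  have hφg : Integrable fun x => φ x * g x :=
    (integrable_gaussianReal_iff hv).1 (hg.continuous.integrable_of_integrable_sub_smul μ hxg)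
  have hφ'g :
      ∫ x, -((x - μ) / v) * φ x * g x = -((v : ℝ)⁻¹ * ∫ x, φ x * ((x - μ) * g x)) := by
    rw [← integral_const_mul, ← integral_neg]
    congr with x
    ring
  have parts := integral_mul_deriv_eq_deriv_mul_of_integrable (u := φ) (v := g)
    (fun x _ => hasDerivAt_gaussianPDFReal μ v x) (fun x _ => (hg x).hasDerivAt) hφg'
    ((hφxg.const_mul (-(v : ℝ)⁻¹)).congr (ae_of_all _ fun x => by simp only [Pi.mul_apply]; ring))
    hφg
  rw [parts, hφ'g, neg_neg, ← mul_assoc, mul_inv_cancel₀ (NNReal.coe_ne_zero.2 hv), one_mul]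

end ProbabilityTheory

theorem stein_lemma_standard_gaussian_general
    {Ω : Type*} [MeasurableSpace Ω] (P : Measure Ω)
    (Y : Ω → ℝ) (hYmeas : Measurable Y)
    (hY : Measure.map Y P = gaussianReal 0 1)
    (g : ℝ → ℝ) (hg : Differentiable ℝ g)
    (hint1 : Integrable (fun ω => deriv g (Y ω)) P)
    (hint2 : Integrable (fun ω => Y ω * g (Y ω)) P) :
    covar P Y (fun ω => g (Y ω)) = ∫ ω, Y ω * g (Y ω) ∂P ∧
    ∫ ω, Y ω * g (Y ω) ∂P = ∫ ω, deriv g (Y ω) ∂P := by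
  have hYγ : IdentDistrib Y id P (gaussianReal 0 1) :=
    ⟨hYmeas.aemeasurable, aemeasurable_id, by rw [hY, Measure.map_id]⟩
  have hxg : Measurable fun x => x * g x := measurable_id.mul hg.continuous.measurable
  have hY₀ : ∫ ω, Y ω ∂P = 0 := hYγ.integral_eq.trans integral_id_gaussianReal
  refine ⟨covar_eq_integral_mul_of_integral_eq_zero
    (hYγ.integrable_iff.2 ((memLp_id_gaussianReal 1).integrable le_rfl)) hint2 hY₀, ?_⟩
  have stein := integral_sub_mul_gaussianReal_eq_var_mul_integral_deriv (μ := 0) (v := 1) hg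
    (((hYγ.comp (measurable_deriv g)).integrable_iff).1 hint1)
    (by simpa using ((hYγ.comp hxg).integrable_iff).1 hint2)
  calc ∫ ω, Y ω * g (Y ω) ∂P = ∫ x, x * g x ∂gaussianReal 0 1 := (hYγ.comp hxg).integral_eq
    _ = ∫ x, deriv g x ∂gaussianReal 0 1 := by simpa using stein
    _ = ∫ ω, deriv g (Y ω) ∂P := (hYγ.comp (measurable_deriv g)).integral_eq.symm

/-- **Stein's lemma for the standard Gaussian.**
If `Y ~ N(0,1)` and `g` is differentiable with `E|g'(Y)| < ∞` and `E|Y g(Y)| < ∞`, then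
`Cov(Y, g(Y)) = E[Y g(Y)] = E[g'(Y)]`. -/
theorem stein_lemma_standard_gaussian
    {Ω : Type*} [MeasurableSpace Ω] (P : Measure Ω) [IsProbabilityMeasure P]
    (Y : Ω → ℝ) (hYmeas : Measurable Y)
    (hY : Measure.map Y P = gaussianReal 0 1)
    (g : ℝ → ℝ) (hg : Differentiable ℝ g)
    (hint1 : Integrable (fun ω => deriv g (Y ω)) P)
    (hint2 : Integrable (fun ω => Y ω * g (Y ω)) P) :
    covar P Y (fun ω => g (Y ω)) = ∫ ω, Y ω * g (Y ω) ∂P ∧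
    ∫ ω, Y ω * g (Y ω) ∂P = ∫ ω, deriv g (Y ω) ∂P :=
  stein_lemma_standard_gaussian_general P Y hYmeas hY g hg hint1 hint2
end

section
/- Let Y be a real random variable whose law has a density h with respect to Lebesgue measure on ℝ, with E[Y] = 0 and E[Y²] = 1. Then the function w ↦ ∫_{w}^{∞} t h(t) dt is nonnegative for every w ∈ ℝ and integrates to 1 over ℝ, i.e., it is a probability density (the density of the Y-zero-biased distribution). -/
/-!
Write `F w = ∫_{t > w} t h t`. For `w ≥ 0` the integrand is nonnegative on `(w, ∞)`; for `w < 0`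
the mean-zero condition gives `F w = ∫_{t ≤ w} (-t) h t`, again an integral of a nonnegative
function. In both cases `F w = ∫ |t| h t` over a half-line, so `F ≥ 0`, and Tonelli gives
`∫_{w ≥ 0} F = ∫ t⁺ · |t| h t` and `∫_{w < 0} F = ∫ t⁻ · |t| h t`, which add up to
`∫ t² h t = E[Y²] = 1`.
-/

open MeasureTheory Set
open scoped ENNReal

section DensityTransfer

variable {Ω α : Type*} [MeasurableSpace Ω] [MeasurableSpace α] {P : Measure Ω} {μ : Measure α}
  {Y : Ω → α} {h : α → ℝ} {g : α → ℝ}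

theorem integrable_mul_of_map_eq_withDensity (hY : Measurable Y) (hh : Measurable h)
    (hh0 : ∀ t, 0 ≤ h t) (hdens : P.map Y = μ.withDensity fun t => ENNReal.ofReal (h t))
    (hg : Measurable g) (hgY : Integrable (fun ω => g (Y ω)) P) :
    Integrable (fun t => g t * h t) μ := by
  have hmap : Integrable g (μ.withDensity fun t => ENNReal.ofReal (h t)) := by
    rw [← hdens]
    exact (integrable_map_measure hg.aestronglyMeasurable hY.aemeasurable).2 hgY
  have := (integrable_withDensity_iff hh.ennreal_ofReal
    (.of_forall fun _ => ENNReal.ofReal_lt_top)).1 hmap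
  simpa only [ENNReal.toReal_ofReal (hh0 _)] using this

theorem integral_comp_eq_integral_mul_of_map_eq_withDensity (hY : Measurable Y)
    (hh : Measurable h) (hh0 : ∀ t, 0 ≤ h t)
    (hdens : P.map Y = μ.withDensity fun t => ENNReal.ofReal (h t)) (hg : Measurable g) :
    ∫ ω, g (Y ω) ∂P = ∫ t, g t * h t ∂μ := by
  rw [← integral_map hY.aemeasurable hg.aestronglyMeasurable, hdens,
    integral_withDensity_eq_integral_toReal_smul hh.ennreal_ofReal
      (.of_forall fun _ => ENNReal.ofReal_lt_top)]
  simp only [ENNReal.toReal_ofReal (hh0 _), smul_eq_mul, mul_comm]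

end DensityTransfer

theorem setLIntegral_lintegral_preimage_eq_lintegral_mul {α β : Type*} [MeasurableSpace α]
    [MeasurableSpace β] (μ : Measure α) (ν : Measure β) [SFinite μ] [SFinite ν] (s : Set α)
    {E : Set (α × β)} (hE : MeasurableSet E) {g : β → ℝ≥0∞} (hg : Measurable g) :
    ∫⁻ w in s, ∫⁻ t in Prod.mk w ⁻¹' E, g t ∂ν ∂μ
      = ∫⁻ t, μ ((fun w => (w, t)) ⁻¹' E ∩ s) * g t ∂ν := by
  calc ∫⁻ w in s, ∫⁻ t in Prod.mk w ⁻¹' E, g t ∂ν ∂μ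
      = ∫⁻ w in s, ν.withDensity g (Prod.mk w ⁻¹' E) ∂μ := by
        simp_rw [withDensity_apply _ (measurable_prodMk_left hE)]
    _ = ((μ.restrict s).prod (ν.withDensity g)) E := (Measure.prod_apply hE).symm
    _ = ∫⁻ t, μ.restrict s ((fun w => (w, t)) ⁻¹' E) ∂ν.withDensity g :=
        Measure.prod_apply_symm hE
    _ = ∫⁻ t, μ ((fun w => (w, t)) ⁻¹' E ∩ s) * g t ∂ν := by
        rw [lintegral_withDensity_eq_lintegral_mul _ hg (measurable_measure_prodMk_right hE)]
        refine lintegral_congr fun t => ?_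
        rw [Pi.mul_apply, mul_comm, Measure.restrict_apply (hE.preimage measurable_prodMk_right)]

theorem setLIntegral_Ici_lintegral_Ioi {g : ℝ → ℝ≥0∞} (hg : Measurable g) :
    ∫⁻ w in Ici 0, ∫⁻ t in Ioi w, g t = ∫⁻ t, ENNReal.ofReal t * g t := by
  refine (setLIntegral_lintegral_preimage_eq_lintegral_mul volume volume _
    (measurableSet_lt measurable_fst measurable_snd) hg).trans (lintegral_congr fun t => ?_)
  simp only [preimage_ofPred_eq]
  rw [show {w : ℝ | w < t} ∩ Ici 0 = Ico 0 t by ext; simp [and_comm], Real.volume_Ico, sub_zero]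

theorem setLIntegral_Iio_lintegral_Iic {g : ℝ → ℝ≥0∞} (hg : Measurable g) :
    ∫⁻ w in Iio 0, ∫⁻ t in Iic w, g t = ∫⁻ t, ENNReal.ofReal (-t) * g t := by
  refine (setLIntegral_lintegral_preimage_eq_lintegral_mul volume volume _
    (measurableSet_le measurable_snd measurable_fst) hg).trans (lintegral_congr fun t => ?_)
  simp only [preimage_ofPred_eq]
  rw [show {w : ℝ | t ≤ w} ∩ Iio 0 = Ico t 0 by ext; simp, Real.volume_Ico, zero_sub]

theorem continuous_integral_Ioi {f : ℝ → ℝ} (hf : Integrable f) :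
    Continuous fun w => ∫ t in Ioi w, f t := by
  have : (fun w => ∫ t in Ioi w, f t) = fun w => (∫ t in Ioi 0, f t) - ∫ t in (0)..w, f t := by
    funext w
    rw [← intervalIntegral.integral_Ioi_sub_Ioi' hf.integrableOn hf.integrableOn, sub_sub_cancel]
  rw [this]
  exact continuous_const.sub (hf.continuous_primitive 0)

theorem integral_Ioi_eq_neg_integral_Iic {f : ℝ → ℝ} (hf : Integrable f) (hf0 : ∫ t, f t = 0)
    (w : ℝ) : ∫ t in Ioi w, f t = -∫ t in Iic w, f t := by
  have := intervalIntegral.integral_Iic_add_Ioi hf.integrableOn hf.integrableOn (b := w)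
  linarith

theorem ENNReal.ofReal_add_ofReal_neg (t : ℝ) :
    ENNReal.ofReal t + ENNReal.ofReal (-t) = ENNReal.ofReal |t| := by
  rcases le_total 0 t with ht | ht
  · rw [ENNReal.ofReal_of_nonpos (neg_nonpos.2 ht), add_zero, abs_of_nonneg ht]
  · rw [ENNReal.ofReal_of_nonpos ht, zero_add, abs_of_nonpos ht]

section ZeroBias

variable {h : ℝ → ℝ}

theorem integrable_abs_mul (hh0 : ∀ t, 0 ≤ h t) (hint : Integrable fun t => t * h t) :
    Integrable fun t => |t| * h t := by
  simpa only [abs_mul, abs_of_nonneg (hh0 _)] using hint.abs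

theorem integral_Ioi_mul_eq_integral_Ioi_abs_mul {w : ℝ} (hw : 0 ≤ w) :
    ∫ t in Ioi w, t * h t = ∫ t in Ioi w, |t| * h t :=
  setIntegral_congr_fun measurableSet_Ioi fun t ht => by rw [abs_of_pos (hw.trans_lt ht)]

theorem integral_Ioi_mul_eq_integral_Iic_abs_mul (hint : Integrable fun t => t * h t)
    (hmean : ∫ t, t * h t = 0) {w : ℝ} (hw : w < 0) :
    ∫ t in Ioi w, t * h t = ∫ t in Iic w, |t| * h t := by
  rw [integral_Ioi_eq_neg_integral_Iic hint hmean, ← integral_neg]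
  exact setIntegral_congr_fun measurableSet_Iic fun t ht => by
    rw [abs_of_neg ((mem_Iic.1 ht).trans_lt hw), neg_mul]

theorem integral_Ioi_mul_nonneg (hh0 : ∀ t, 0 ≤ h t) (hint : Integrable fun t => t * h t)
    (hmean : ∫ t, t * h t = 0) (w : ℝ) : 0 ≤ ∫ t in Ioi w, t * h t := by
  have habs (t : ℝ) : 0 ≤ |t| * h t := mul_nonneg (abs_nonneg t) (hh0 t)
  rcases le_or_gt 0 w with hw | hw
  · rw [integral_Ioi_mul_eq_integral_Ioi_abs_mul hw]
    exact integral_nonneg habs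
  · rw [integral_Ioi_mul_eq_integral_Iic_abs_mul hint hmean hw]
    exact integral_nonneg habs

theorem lintegral_ofReal_integral_Ioi_mul (hh : Measurable h) (hh0 : ∀ t, 0 ≤ h t)
    (hint : Integrable fun t => t * h t) (hmean : ∫ t, t * h t = 0) :
    ∫⁻ w, ENNReal.ofReal (∫ t in Ioi w, t * h t) = ∫⁻ t, ENNReal.ofReal (t ^ 2 * h t) := by
  set g : ℝ → ℝ≥0∞ := fun t => ENNReal.ofReal (|t| * h t)
  have hg : Measurable g := (continuous_abs.measurable.mul hh).ennreal_ofReal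
  have habs := integrable_abs_mul hh0 hint
  have habs0 : 0 ≤ᵐ[volume] fun t => |t| * h t :=
    .of_forall fun t => mul_nonneg (abs_nonneg t) (hh0 t)
  have hpos : ∀ w ∈ Ici (0 : ℝ), ENNReal.ofReal (∫ t in Ioi w, t * h t) = ∫⁻ t in Ioi w, g t :=
    fun w hw => by
      rw [integral_Ioi_mul_eq_integral_Ioi_abs_mul hw,
        ofReal_integral_eq_lintegral_ofReal habs.integrableOn (ae_restrict_of_ae habs0)]
  have hneg : ∀ w ∈ Iio (0 : ℝ), ENNReal.ofReal (∫ t in Ioi w, t * h t) = ∫⁻ t in Iic w, g t :=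
    fun w hw => by
      rw [integral_Ioi_mul_eq_integral_Iic_abs_mul hint hmean hw,
        ofReal_integral_eq_lintegral_ofReal habs.integrableOn (ae_restrict_of_ae habs0)]
  rw [← lintegral_add_compl _ measurableSet_Ici, compl_Ici,
    setLIntegral_congr_fun measurableSet_Ici hpos, setLIntegral_congr_fun measurableSet_Iio hneg,
    setLIntegral_Ici_lintegral_Ioi hg, setLIntegral_Iio_lintegral_Iic hg,
    ← lintegral_add_left (f := fun t => ENNReal.ofReal t * g t) (ENNReal.measurable_ofReal.mul hg)]
  refine lintegral_congr fun t => ?_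
  rw [← add_mul, ENNReal.ofReal_add_ofReal_neg, ← ENNReal.ofReal_mul (abs_nonneg t), ← mul_assoc,
    abs_mul_abs_self, sq]

theorem integral_integral_Ioi_mul (hh : Measurable h) (hh0 : ∀ t, 0 ≤ h t)
    (hint : Integrable fun t => t * h t) (hmean : ∫ t, t * h t = 0)
    (hint2 : Integrable fun t => t ^ 2 * h t) :
    ∫ w, ∫ t in Ioi w, t * h t = ∫ t, t ^ 2 * h t := by
  have hsq0 (t : ℝ) : 0 ≤ t ^ 2 * h t := mul_nonneg (sq_nonneg t) (hh0 t)
  rw [integral_eq_lintegral_of_nonneg_ae (.of_forall (integral_Ioi_mul_nonneg hh0 hint hmean))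
      (continuous_integral_Ioi hint).aestronglyMeasurable,
    lintegral_ofReal_integral_Ioi_mul hh hh0 hint hmean,
    ← ofReal_integral_eq_lintegral_ofReal hint2 (.of_forall hsq0)]
  exact ENNReal.toReal_ofReal (integral_nonneg hsq0)

end ZeroBias

/-- **The zero-biased density is a probability density.**
If `Y` has Lebesgue density `h`, mean `0` and variance `1`, then
`w ↦ ∫_{w}^{∞} t h(t) dt` is nonnegative everywhere and integrates to `1` over `ℝ`:
it is the density of the `Y`-zero-biased distribution. -/
theorem zero_biased_density_is_probability_density
    {Ω : Type*} [MeasurableSpace Ω] (P : Measure Ω) [IsProbabilityMeasure P]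
    (Y : Ω → ℝ) (hYmeas : Measurable Y)
    (h : ℝ → ℝ) (hhmeas : Measurable h) (hhnonneg : ∀ t, 0 ≤ h t)
    (hdens : Measure.map Y P = volume.withDensity fun t => ENNReal.ofReal (h t))
    (hL2 : MemLp Y 2 P)
    (hmean : ∫ ω, Y ω ∂P = 0)
    (hvar : ∫ ω, (Y ω) ^ 2 ∂P = 1) :
    (∀ w : ℝ, 0 ≤ ∫ t in Set.Ioi w, t * h t) ∧
    (∫ w : ℝ, ∫ t in Set.Ioi w, t * h t) = 1 := by
  have hint : Integrable fun t => t * h t :=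
    integrable_mul_of_map_eq_withDensity hYmeas hhmeas hhnonneg hdens (g := fun t => t)
      measurable_id (hL2.integrable one_le_two)
  have hint2 : Integrable fun t => t ^ 2 * h t :=
    integrable_mul_of_map_eq_withDensity hYmeas hhmeas hhnonneg hdens (measurable_id.pow_const 2)
      hL2.integrable_sq
  have hmean' : ∫ t, t * h t = 0 :=
    (integral_comp_eq_integral_mul_of_map_eq_withDensity hYmeas hhmeas hhnonneg hdens
      (g := fun t => t) measurable_id).symm.trans hmean
  have hvar' : ∫ t, t ^ 2 * h t = 1 :=
    (integral_comp_eq_integral_mul_of_map_eq_withDensity hYmeas hhmeas hhnonneg hdens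
      (measurable_id.pow_const 2)).symm.trans hvar
  exact ⟨integral_Ioi_mul_nonneg hhnonneg hint hmean',
    (integral_integral_Ioi_mul hhmeas hhnonneg hint hmean' hint2).trans hvar'⟩
end

section
/- Let Y = (Y_1, ..., Y_d) be a random vector on ℝ^d whose law has Lebesgue density of the form y ↦ c · K(Σ_{l=1}^{d} ω_l y_l²) for some measurable K: ℝ → [0,∞), normalizing constant c > 0, and positive weights ω_1,...,ω_d > 0 (an elliptical density with diagonal matrix Ω = diag(ω_1,...,ω_d)), and suppose E|Y_k| < ∞ for each k. Then for each k, the conditional expectation of Y_k given the remaining coordinates is zero almost surely: E[Y_k | Y_1,...,Y_{k-1}, Y_{k+1},...,Y_d] = 0 = E[Y_k]. -/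
open MeasureTheory ProbabilityTheory
open scoped ENNReal

/-!
Reflecting the `k`-th coordinate preserves Lebesgue measure, and the density depends on `y_k`
only through `y_k²`, so the law of `Y` is invariant under this reflection. Hence
`(Y_k, Y^{∖k})` and `(-Y_k, Y^{∖k})` have the same law, and for every event `A` in the
σ-algebra of `Y^{∖k}` we get `E[Y_k 1_A] = E[-Y_k 1_A]`, i.e. `E[Y_k 1_A] = 0`.
-/

theorem MeasurableEmbedding.map_withDensity_comp {α β : Type*} [MeasurableSpace α]
    [MeasurableSpace β] {g : α → β} (hg : MeasurableEmbedding g) (μ : Measure α)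
    (ρ : β → ℝ≥0∞) :
    Measure.map g (μ.withDensity (ρ ∘ g)) = (Measure.map g μ).withDensity ρ := by
  ext s hs
  rw [hg.map_apply, withDensity_apply _ (hg.measurable hs), withDensity_apply _ hs,
    hg.restrict_map, hg.lintegral_map]
  rfl

section Reflection

variable {ι : Type*} [DecidableEq ι]

def reflectCoord (k : ι) : (ι → ℝ) ≃ᵐ (ι → ℝ) :=
  MeasurableEquiv.piCongrRight fun l =>
    if l = k then MeasurableEquiv.neg ℝ else MeasurableEquiv.refl ℝ

theorem reflectCoord_apply (k : ι) (y : ι → ℝ) (l : ι) :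
    reflectCoord k y l = if l = k then -y l else y l := by
  unfold reflectCoord
  split_ifs <;> simp_all [MeasurableEquiv.piCongrRight]

theorem reflectCoord_apply_self (k : ι) (y : ι → ℝ) : reflectCoord k y k = -y k := by
  simp [reflectCoord_apply]

theorem reflectCoord_apply_of_ne {k l : ι} (h : l ≠ k) (y : ι → ℝ) :
    reflectCoord k y l = y l := by
  simp [reflectCoord_apply, h]

theorem sq_reflectCoord_apply (k : ι) (y : ι → ℝ) (l : ι) :
    reflectCoord k y l ^ 2 = y l ^ 2 := by
  rw [reflectCoord_apply]
  split_ifs <;> simp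

theorem measurePreserving_reflectCoord [Fintype ι] (k : ι) :
    MeasurePreserving (reflectCoord k) volume volume := by
  refine volume_preserving_pi fun l => ?_
  by_cases h : l = k
  · simpa [h] using Measure.measurePreserving_neg volume
  · simpa [h] using MeasurePreserving.id volume

end Reflection

theorem condExp_ae_eq_zero_of_identDistrib_neg {Ω β : Type*} {mΩ : MeasurableSpace Ω}
    [MeasurableSpace β] {P : Measure Ω} [IsFiniteMeasure P] {X : Ω → ℝ} {Z : Ω → β}
    (hZ : Measurable Z) (hX : Integrable X P)
    (h : IdentDistrib (fun ω => (X ω, Z ω)) (fun ω => (-X ω, Z ω)) P P) :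
    P[X | MeasurableSpace.comap Z inferInstance] =ᵐ[P] 0 := by
  refine (ae_eq_condExp_of_forall_setIntegral_eq hZ.comap_le hX
    (fun _ _ _ => integrableOn_zero) (fun s hs _ => ?_) aestronglyMeasurable_zero).symm
  obtain ⟨t, ht, rfl⟩ := hs
  set g : ℝ × β → ℝ := (Prod.snd ⁻¹' t).indicator Prod.fst
  have hg : Measurable g := measurable_fst.indicator (measurable_snd ht)
  have hodd : ∫ ω, g (X ω, Z ω) ∂P = -∫ ω, g (X ω, Z ω) ∂P :=
    calc ∫ ω, g (X ω, Z ω) ∂P = ∫ ω, g (-X ω, Z ω) ∂P := (h.comp hg).integral_eq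
      _ = ∫ ω, -g (X ω, Z ω) ∂P := by
        congr with ω
        by_cases hω : Z ω ∈ t <;> simp [g, hω]
      _ = -∫ ω, g (X ω, Z ω) ∂P := integral_neg _
  have hset : ∫ ω in Z ⁻¹' t, X ω ∂P = ∫ ω, g (X ω, Z ω) ∂P := by
    rw [← integral_indicator (hZ ht)]
    rfl
  simp only [integral_zero, hset]
  linarith

theorem identDistrib_neg_coord_of_map_reflectCoord {Ω ι : Type*} [DecidableEq ι]
    {mΩ : MeasurableSpace Ω} {P : Measure Ω} {Y : Ω → ι → ℝ} (hY : AEMeasurable Y P) {k : ι}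
    (h : Measure.map (reflectCoord k) (Measure.map Y P) = Measure.map Y P) :
    IdentDistrib (fun ω => (Y ω k, fun l : {l // l ≠ k} => Y ω l))
      (fun ω => (-Y ω k, fun l : {l // l ≠ k} => Y ω l)) P P := by
  have hYR : IdentDistrib Y (reflectCoord k ∘ Y) P P :=
    ⟨hY, (reflectCoord k).measurable.comp_aemeasurable hY, by
      rw [← AEMeasurable.map_map_of_aemeasurable (reflectCoord k).measurable.aemeasurable hY, h]⟩
  have hφ : Measurable fun y : ι → ℝ => (y k, fun l : {l // l ≠ k} => y l) := by fun_prop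
  have hφR : (fun ω => (-Y ω k, fun l : {l // l ≠ k} => Y ω l)) =
      (fun y => (y k, fun l : {l // l ≠ k} => y l)) ∘ reflectCoord k ∘ Y := by
    ext ω l
    · simp [reflectCoord_apply_self]
    · simp [reflectCoord_apply_of_ne l.2]
  rw [hφR]
  exact hYR.comp hφ

theorem elliptical_zero_conditional_mean_general
    {Ω : Type*} [MeasurableSpace Ω] (P : Measure Ω) [IsProbabilityMeasure P]
    (d : ℕ) (Y : Ω → Fin d → ℝ) (hYmeas : Measurable Y)
    (K : ℝ → ℝ)
    (cst : ℝ)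
    (w : Fin d → ℝ)
    (hdens : Measure.map Y P
      = (volume : Measure (Fin d → ℝ)).withDensity
          fun y => ENNReal.ofReal (cst * K (∑ l, w l * (y l) ^ 2)))
    (hint : ∀ k, Integrable (fun ω => Y ω k) P)
    (k : Fin d) :
    P[(fun ω => Y ω k) |
        MeasurableSpace.comap (fun ω (l : {l : Fin d // l ≠ k}) => Y ω l.1) inferInstance]
      =ᵐ[P] 0 ∧
    ∫ ω, Y ω k ∂P = 0 := by
  set ρ : (Fin d → ℝ) → ℝ≥0∞ := fun y => ENNReal.ofReal (cst * K (∑ l, w l * (y l) ^ 2))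
  have hρ : ρ ∘ reflectCoord k = ρ := by
    funext y
    simp only [ρ, Function.comp_apply, sq_reflectCoord_apply]
  have hsymm : Measure.map (reflectCoord k) (Measure.map Y P) = Measure.map Y P := by
    rw [hdens, ← hρ, (reflectCoord k).measurableEmbedding.map_withDensity_comp,
      (measurePreserving_reflectCoord k).map_eq, hρ]
  have hZ : Measurable fun ω (l : {l : Fin d // l ≠ k}) => Y ω l.1 := by fun_prop
  have hcond := condExp_ae_eq_zero_of_identDistrib_neg hZ (hint k)
    (identDistrib_neg_coord_of_map_reflectCoord hYmeas.aemeasurable hsymm)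
  refine ⟨hcond, ?_⟩
  rw [← integral_condExp hZ.comap_le, integral_congr_ae hcond]
  simp

/-- **Zero conditional means for uncorrelated elliptical distributions.**
If `Y = (Y_1,…,Y_d)` has an elliptical Lebesgue density `y ↦ cst · K(∑_l ω_l y_l²)` with
positive weights `ω_l` (diagonal `Ω`), and `E|Y_k| < ∞` for each `k`, then for each `k`
the conditional expectation of `Y_k` given the remaining coordinates is `0` almost
surely, and `E[Y_k] = 0`. -/
theorem elliptical_zero_conditional_mean
    {Ω : Type*} [MeasurableSpace Ω] (P : Measure Ω) [IsProbabilityMeasure P]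
    (d : ℕ) (Y : Ω → Fin d → ℝ) (hYmeas : Measurable Y)
    (K : ℝ → ℝ) (hKmeas : Measurable K) (hKnonneg : ∀ t, 0 ≤ K t)
    (cst : ℝ) (hcst : 0 < cst)
    (w : Fin d → ℝ) (hw : ∀ l, 0 < w l)
    (hdens : Measure.map Y P
      = (volume : Measure (Fin d → ℝ)).withDensity
          fun y => ENNReal.ofReal (cst * K (∑ l, w l * (y l) ^ 2)))
    (hint : ∀ k, Integrable (fun ω => Y ω k) P)
    (k : Fin d) :
    P[(fun ω => Y ω k) |
        MeasurableSpace.comap (fun ω (l : {l : Fin d // l ≠ k}) => Y ω l.1) inferInstance]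
      =ᵐ[P] 0 ∧
    ∫ ω, Y ω k ∂P = 0 :=
  elliptical_zero_conditional_mean_general P d Y hYmeas K cst w hdens hint k
end
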